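/- arXiv:2501.14658 — 2 statements merged into one kernel-verified Lean document; each statement's English description precedes it below -/
import Mathlib

section
/- Let G, H be graphs, let Z ⊆ V(G) with |Z| ≥ 2, and let η be a faithful extended strip decomposition of (G,Z) with pattern H. Then for every atom A of η, the boundary δ(A) has a core of size at most 3, i.e., there exists X ⊆ V(G) with |X| ≤ 3 and δ(A) ⊆ N[X]. -/
open scoped BigOperators
open SimpleGraph

attribute [local instance] Classical.propDecidable

namespace ArxivFormal

/-- The closed neighborhood `N[X]` of a set of vertices `X`. -/
def closedNbhd {V : Type} (G : SimpleGraph V) (X : Set V) : Set V :=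
  X ∪ {v | ∃ x ∈ X, G.Adj x v}

/-- The open neighborhood of the set `X` inside the ambient vertex set `A`
(i.e. computed in the induced subgraph `G[A]`). -/
def openNbhdIn {V : Type} (G : SimpleGraph V) (A X : Set V) : Set V :=
  {v | v ∈ A ∧ v ∉ X ∧ ∃ x ∈ X, G.Adj x v}

/-- Two (disjoint) vertex sets are anticomplete if there are no edges between them. -/
def Anticomplete {V : Type} (G : SimpleGraph V) (X Y : Set V) : Prop :=
  Disjoint X Y ∧ ∀ x ∈ X, ∀ y ∈ Y, ¬ G.Adj x y

/-- `alphaOn G S` is the stability (independence) number of `G[S]`. -/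
noncomputable def alphaOn {V : Type} [Fintype V] (G : SimpleGraph V) (S : Set V) : ℕ :=
  sSup {n | ∃ I : Finset V, ↑I ⊆ S ∧ (∀ u ∈ I, ∀ v ∈ I, ¬ G.Adj u v) ∧ I.card = n}

/-- The weight `w(S)` of a set of vertices. -/
noncomputable def setWeight {V : Type} [Fintype V] (w : V → ℝ) (S : Set V) : ℝ :=
  ∑ v ∈ Finset.univ.filter (fun v => v ∈ S), w v

/-- A weight function takes values in `[0,1]` and has total weight at most `1`. -/
def IsWeightFunction {V : Type} [Fintype V] (w : V → ℝ) : Prop :=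
  (∀ v, 0 ≤ w v ∧ w v ≤ 1) ∧ ∑ v, w v ≤ 1

/-- A normal weight function has total weight exactly `1`. -/
def IsNormalWeightFunction {V : Type} [Fintype V] (w : V → ℝ) : Prop :=
  (∀ v, 0 ≤ w v ∧ w v ≤ 1) ∧ ∑ v, w v = 1

/-- The vertex set (as a subset of the ambient vertex set) of the connected component `c`
of the induced subgraph `G[A]`. -/
def componentSet {V : Type} (G : SimpleGraph V) (A : Set V)
    (c : (G.induce A).ConnectedComponent) : Set V :=
  {v | ∃ h : v ∈ A, (G.induce A).connectedComponentMk ⟨v, h⟩ = c}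

/-- `X` is a `(w,c)`-balanced separator of the induced subgraph `G[B]`:
every component of `G[B] ∖ X` has weight at most `c`. -/
def IsSepWithin {V : Type} [Fintype V] (G : SimpleGraph V) (w : V → ℝ) (c : ℝ)
    (B X : Set V) : Prop :=
  ∀ comp : (G.induce (B \ X)).ConnectedComponent,
    setWeight w (componentSet G (B \ X) comp) ≤ c

/-- `X` is a `(w,c)`-balanced separator of `G`. -/
def IsBalancedSeparator {V : Type} [Fintype V] (G : SimpleGraph V) (w : V → ℝ)
    (c : ℝ) (X : Set V) : Prop :=
  IsSepWithin G w c Set.univ X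

/-- `G` contains no induced copy of `H`. -/
def IndFree {V W : Type} (G : SimpleGraph V) (H : SimpleGraph W) : Prop :=
  IsEmpty (H ↪g G)

/-- The graph `S_{t,t,t}`: the claw `K_{1,3}` with every edge subdivided `t-1` times,
i.e. three paths with `t` edges each, glued at a common center. -/
def subClaw (t : ℕ) : SimpleGraph (Unit ⊕ Fin 3 × Fin t) :=
  SimpleGraph.fromRel fun a b =>
    match a, b with
    | Sum.inl _, Sum.inr p => (p.2 : ℕ) = 0
    | Sum.inr p, Sum.inr q => p.1 = q.1 ∧ (p.2 : ℕ) + 1 = (q.2 : ℕ)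
    | _, _ => False

/-- The complete bipartite graph `K_{t,t}`. -/
def Ktt (t : ℕ) : SimpleGraph (Fin t ⊕ Fin t) := completeBipartiteGraph (Fin t) (Fin t)

/-- The `t`-by-`t` hexagonal grid (wall): a brick-wall graph with horizontal paths joined by
vertical edges whose positions alternate between consecutive rows. -/
def wall (t : ℕ) : SimpleGraph (Fin (t + 1) × Fin (2 * t + 2)) :=
  SimpleGraph.fromRel fun a b =>
    (a.1 = b.1 ∧ (a.2 : ℕ) + 1 = (b.2 : ℕ)) ∨
    ((a.1 : ℕ) + 1 = (b.1 : ℕ) ∧ a.2 = b.2 ∧ ((a.1 : ℕ) + (a.2 : ℕ)) % 2 = 0)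

/-- The graph obtained from `W` by subdividing the edge `uv` once (the new vertex is `none`). -/
def subdivideEdge {β : Type} (W : SimpleGraph β) (u v : β) : SimpleGraph (Option β) :=
  SimpleGraph.fromRel fun a b =>
    (∃ x y : β, a = some x ∧ b = some y ∧ W.Adj x y ∧ s(x, y) ≠ s(u, v)) ∨
    (a = none ∧ (b = some u ∨ b = some v))

/-- `IsSubdivisionOf G W` : `G` is (isomorphic to) a graph obtained from `W` by
repeatedly subdividing edges. -/
inductive IsSubdivisionOf : {α : Type} → {β : Type} → SimpleGraph α → SimpleGraph β → Prop
  | of_iso {α β : Type} {G : SimpleGraph α} {W : SimpleGraph β} :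
      (G ≃g W) → IsSubdivisionOf G W
  | step {α β : Type} {G : SimpleGraph α} {W : SimpleGraph β} {u v : β} :
      W.Adj u v → IsSubdivisionOf G (subdivideEdge W u v) → IsSubdivisionOf G W

/-- `G` contains no induced copy of the line graph of any subdivision of the `t×t` wall,
i.e. `G` is `𝓛_t`-free. -/
def LFree (t : ℕ) {V : Type} (G : SimpleGraph V) : Prop :=
  ∀ (β : Type) (H : SimpleGraph β), IsSubdivisionOf H (wall t) → IndFree G (lineGraph H)

/-- Membership in `𝓜_t`: `G` is `(𝓛_t ∪ {S_{t,t,t}, K_{t,t}})`-free. -/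
def InM (t : ℕ) {V : Type} (G : SimpleGraph V) : Prop :=
  LFree t G ∧ IndFree G (subClaw t) ∧ IndFree G (Ktt t)

/-- Membership in `𝓜_t*`: `G` is `(𝓛_t ∪ {S_{t,t,t}})`-free. -/
def InMstar (t : ℕ) {V : Type} (G : SimpleGraph V) : Prop :=
  LFree t G ∧ IndFree G (subClaw t)

/-- A tree decomposition of `G`. -/
structure TreeDecomp {V : Type} (G : SimpleGraph V) where
  ι : Type
  tree : SimpleGraph ι
  isTree : tree.IsTree
  bag : ι → Set V
  mem_bag : ∀ v : V, ∃ i, v ∈ bag i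
  edge_bag : ∀ ⦃u v : V⦄, G.Adj u v → ∃ i, u ∈ bag i ∧ v ∈ bag i
  bag_connected : ∀ v : V, (tree.induce {i | v ∈ bag i}).Connected

/-- An extended strip decomposition of `(G, Z)` with pattern `H`. -/
structure ESD {α β : Type} (G : SimpleGraph α) (Z : Set α) (H : SimpleGraph β) where
  vMap : β → Set α
  eMap : H.edgeSet → Set α
  tMap : {T : Finset β // H.IsNClique 3 T} → Set α
  evMap : H.edgeSet → β → Set α
  evMap_eq_empty : ∀ (e : H.edgeSet) (v : β), v ∉ (e : Sym2 β) → evMap e v = ∅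
  evMap_subset : ∀ (e : H.edgeSet) (v : β), evMap e v ⊆ eMap e
  covers : ∀ x : α, (∃ v, x ∈ vMap v) ∨ (∃ e, x ∈ eMap e) ∨ (∃ T, x ∈ tMap T)
  disj_vv : ∀ v v', v ≠ v' → Disjoint (vMap v) (vMap v')
  disj_ee : ∀ e e', e ≠ e' → Disjoint (eMap e) (eMap e')
  disj_tt : ∀ T T', T ≠ T' → Disjoint (tMap T) (tMap T')
  disj_ve : ∀ v e, Disjoint (vMap v) (eMap e)
  disj_vt : ∀ v T, Disjoint (vMap v) (tMap T)
  disj_et : ∀ e T, Disjoint (eMap e) (tMap T)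
  adj_iff : ∀ (e f : H.edgeSet), e ≠ f → ∀ x ∈ eMap e, ∀ y ∈ eMap f,
    (G.Adj x y ↔ ∃ v : β, v ∈ (e : Sym2 β) ∧ v ∈ (f : Sym2 β) ∧
      x ∈ evMap e v ∧ y ∈ evMap f v)
  vertex_bd : ∀ (v : β) (x y : α), x ∈ vMap v → y ∉ vMap v → G.Adj x y →
    ∃ e : H.edgeSet, v ∈ (e : Sym2 β) ∧ y ∈ evMap e v
  triangle_bd : ∀ (T : {T : Finset β // H.IsNClique 3 T}) (x y : α),
    x ∈ tMap T → y ∉ tMap T → G.Adj x y →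
    ∃ u v : β, u ≠ v ∧ u ∈ T.1 ∧ v ∈ T.1 ∧
      ∃ e : H.edgeSet, (e : Sym2 β) = s(u, v) ∧ y ∈ evMap e u ∧ y ∈ evMap e v
  leaves_equiv : Nonempty (Z ≃ {w : β // ∃! u, H.Adj w u})
  leaves_map : ∀ z ∈ Z, ∃ w : β, (∃! u, H.Adj w u) ∧
    ∀ e : H.edgeSet, w ∈ (e : Sym2 β) → evMap e w = {z}

namespace ESD

variable {α β : Type} {G : SimpleGraph α} {Z : Set α} {H : SimpleGraph β}

/-- `η` is faithful: for every edge `uv` of `H` there is an `e`-rung,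
an induced path inside `η(e)` from `η(e,v)` to `η(e,u)` whose internal vertices avoid
`η(e,u) ∪ η(e,v)`. -/
def IsFaithful (η : ESD G Z H) : Prop :=
  ∀ (u v : β) (h : H.Adj u v), ∃ (k : ℕ) (hk : 0 < k) (p : Fin k → α),
    Function.Injective p ∧
    (∀ i j : Fin k, (i : ℕ) < (j : ℕ) → (G.Adj (p i) (p j) ↔ (j : ℕ) = (i : ℕ) + 1)) ∧
    (∀ i, p i ∈ η.eMap ⟨s(u, v), H.mem_edgeSet.mpr h⟩) ∧
    p ⟨0, hk⟩ ∈ η.evMap ⟨s(u, v), H.mem_edgeSet.mpr h⟩ v ∧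
    p ⟨k - 1, Nat.sub_lt hk Nat.one_pos⟩ ∈ η.evMap ⟨s(u, v), H.mem_edgeSet.mpr h⟩ u ∧
    ∀ i : Fin k, (i : ℕ) ≠ 0 → (i : ℕ) ≠ k - 1 →
      p i ∉ η.evMap ⟨s(u, v), H.mem_edgeSet.mpr h⟩ u ∧
      p i ∉ η.evMap ⟨s(u, v), H.mem_edgeSet.mpr h⟩ v

/-- `η.IsAtomBd A Δ` : `A` is an atom of `η` with boundary `Δ`. -/
def IsAtomBd (η : ESD G Z H) (A Δ : Set α) : Prop :=
  (∃ v : β, A = η.vMap v ∧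
    Δ = {x | ∃ e : H.edgeSet, v ∈ (e : Sym2 β) ∧ x ∈ η.evMap e v}) ∨
  (∃ T, A = η.tMap T ∧
    Δ = {x | ∃ u v : β, u ≠ v ∧ u ∈ T.1 ∧ v ∈ T.1 ∧
      ∃ e : H.edgeSet, (e : Sym2 β) = s(u, v) ∧ x ∈ η.evMap e u ∧ x ∈ η.evMap e v}) ∨
  (∃ (u v : β) (h : H.Adj u v),
    A = η.eMap ⟨s(u, v), H.mem_edgeSet.mpr h⟩ \
        (η.evMap ⟨s(u, v), H.mem_edgeSet.mpr h⟩ u ∪ η.evMap ⟨s(u, v), H.mem_edgeSet.mpr h⟩ v) ∧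
    Δ = η.evMap ⟨s(u, v), H.mem_edgeSet.mpr h⟩ u ∪ η.evMap ⟨s(u, v), H.mem_edgeSet.mpr h⟩ v)

/-- `A` is an atom of `η`. -/
def IsAtom (η : ESD G Z H) (A : Set α) : Prop := ∃ Δ, η.IsAtomBd A Δ

end ESD
/-- A class of (finite) graphs. -/
def GraphClass : Type 1 := ∀ (V : Type) [Fintype V], SimpleGraph V → Prop

/-- The class `𝓒` is closed under taking induced subgraphs. -/
def GraphClass.ClosedUnderInduced (𝓒 : GraphClass) : Prop :=
  ∀ (V : Type) [Fintype V] (G : SimpleGraph V) (S : Set V) [Fintype S],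
    𝓒 V G → 𝓒 S (G.induce S)

/-- `G` is `k`-breakable: for every weight function there is a `w`-balanced separator
with a core of size strictly less than `k`. -/
def KBreakableGraph {V : Type} [Fintype V] (G : SimpleGraph V) (k : ℕ) : Prop :=
  ∀ w : V → ℝ, IsWeightFunction w → ∃ (Y : Set V) (X : Finset V),
    X.card < k ∧ Y ⊆ closedNbhd G ↑X ∧ IsBalancedSeparator G w (1 / 2) Y

/-- A `k`-breakable class of graphs. -/
def GraphClass.KBreakable (𝓒 : GraphClass) (k : ℕ) : Prop :=
  𝓒.ClosedUnderInduced ∧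
  ∀ (V : Type) [Fintype V] (G : SimpleGraph V), 𝓒 V G → KBreakableGraph G k

/-- `(S, C)` is a `(w, ε)`-boosted separator of `G`: for a maximum-weight component `B`
of `G ∖ C`, either `w(B) ≤ 1/2` or `S ∩ B` is a `(w, ε)`-balanced separator of `G[B]`. -/
def IsBoostedSeparator {V : Type} [Fintype V] (G : SimpleGraph V) (w : V → ℝ) (ε : ℝ)
    (S C : Set V) : Prop :=
  ∀ b : (G.induce Cᶜ).ConnectedComponent,
    (∀ b', setWeight w (componentSet G Cᶜ b') ≤ setWeight w (componentSet G Cᶜ b)) →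
    (setWeight w (componentSet G Cᶜ b) ≤ 1 / 2 ∨
      IsSepWithin G w ε (componentSet G Cᶜ b) (S ∩ componentSet G Cᶜ b))

/-- `G` is `(k, f, ε)`-breakable. -/
def KFEBreakableGraph {V : Type} [Fintype V] (G : SimpleGraph V) (k : ℕ) (f : ℕ → ℝ)
    (ε : ℝ) : Prop :=
  ∀ w : V → ℝ, IsWeightFunction w → ∃ (S C : Set V) (X : Finset V),
    X.card ≤ k ∧ S ⊆ closedNbhd G ↑X ∧ IsBoostedSeparator G w ε S C ∧
    (alphaOn G C : ℝ) ≤ f (Fintype.card V)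

/-- A `(k, f, ε)`-breakable class of graphs. -/
def GraphClass.KFEBreakable (𝓒 : GraphClass) (k : ℕ) (f : ℕ → ℝ) (ε : ℝ) : Prop :=
  𝓒.ClosedUnderInduced ∧
  ∀ (V : Type) [Fintype V] (G : SimpleGraph V), 𝓒 V G → KFEBreakableGraph G k f ε

section Problematic

variable {V : Type} [Fintype V]

/-- For a vertex `x` and a component `b` of `G[A] ∖ N[X]`, the quantity
`α(N(x) ∩ N(B))`, all computed in the graph `G[A]`. -/
noncomputable def probAlpha (G : SimpleGraph V) (A : Set V) (X : Finset V) (x : V)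
    (b : (G.induce (A \ closedNbhd G ↑X)).ConnectedComponent) : ℕ :=
  alphaOn G (G.neighborSet x ∩
    openNbhdIn G A (componentSet G (A \ closedNbhd G ↑X) b))

/-- `β(G[A], X)`: the largest `β` for which an `(X, β)`-problematic pair exists in `G[A]`
(and `0` if there is none). -/
noncomputable def maxBetaIn (G : SimpleGraph V) (w : V → ℝ) (ε : ℝ) (A : Set V)
    (X : Finset V) : ℕ :=
  Finset.sup Finset.univ
    (fun p : V × (G.induce (A \ closedNbhd G ↑X)).ConnectedComponent =>
      if p.1 ∈ X ∧ ε < setWeight w (componentSet G (A \ closedNbhd G ↑X) p.2)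
      then probAlpha G A X p.1 p.2 else 0)

/-- `W(G[A], X, β)`: the total weight of big components appearing in `(X, 3β/4)`-problematic
pairs of `G[A]`. -/
noncomputable def probWeightIn (G : SimpleGraph V) (w : V → ℝ) (ε : ℝ) (A : Set V)
    (X : Finset V) (β : ℝ) : ℝ :=
  ∑ x ∈ X, ∑ b : (G.induce (A \ closedNbhd G ↑X)).ConnectedComponent,
    if ε < setWeight w (componentSet G (A \ closedNbhd G ↑X) b) ∧
       3 * β / 4 ≤ (probAlpha G A X x b : ℝ)
    then setWeight w (componentSet G (A \ closedNbhd G ↑X) b) else 0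

end Problematic

/-- The `2`-subdivision of a graph: every edge is replaced by a three-edge path. The two
internal vertices of the path replacing an edge are the two darts of that edge. -/
def twoSubdivision {V : Type} (H : SimpleGraph V) : SimpleGraph (V ⊕ H.Dart) :=
  SimpleGraph.fromRel fun a b =>
    match a, b with
    | Sum.inl u, Sum.inr d => d.toProd.1 = u
    | Sum.inr d, Sum.inr d' => d' = d.symm
    | _, _ => False

/-- `K_γ^{(2)}`, the `2`-subdivision of the complete graph on `γ` vertices. -/
def Kgamma2 (γ : ℕ) : SimpleGraph (Fin γ ⊕ (⊤ : SimpleGraph (Fin γ)).Dart) :=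
  twoSubdivision (⊤ : SimpleGraph (Fin γ))

/-- `(A, B)` forms a `K_{s,t}` in `G` with respect to `Y`. -/
def IsKstWrt {V : Type} (G : SimpleGraph V) (s t : ℕ) (Y : Set V)
    (A B : Finset V) : Prop :=
  A.card = s ∧ B.card = t ∧ Disjoint A B ∧ ↑B ⊆ Y ∧
  (∀ u ∈ A, ∀ v ∈ A, ¬ G.Adj u v) ∧ (∀ u ∈ B, ∀ v ∈ B, ¬ G.Adj u v) ∧
  (∀ u ∈ A, ∀ v ∈ B, G.Adj u v)

/-- `G` is `K_{s,t}`-free with respect to `Y`. -/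
def KstFreeWrt {V : Type} (G : SimpleGraph V) (s t : ℕ) (Y : Set V) : Prop :=
  ¬ ∃ A B : Finset V, IsKstWrt G s t Y A B

/-- `p` enumerates the vertices of an induced path in `G`. -/
def IsPathSeq {V : Type} (G : SimpleGraph V) (k : ℕ) (p : Fin k → V) : Prop :=
  Function.Injective p ∧
  ∀ i j : Fin k, (i : ℕ) < (j : ℕ) → (G.Adj (p i) (p j) ↔ (j : ℕ) = (i : ℕ) + 1)

/-- `G` is a path. -/
def IsPathGraph {V : Type} (G : SimpleGraph V) : Prop :=
  ∃ n : ℕ, Nonempty (G ≃g SimpleGraph.pathGraph n)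

/-- `G` is a caterpillar: a tree with maximum degree at most three in which some path
contains all vertices of degree three. -/
def IsCaterpillar {V : Type} (G : SimpleGraph V) : Prop :=
  G.IsTree ∧ (∀ v, (G.neighborSet v).ncard ≤ 3) ∧
  ∃ (k : ℕ) (p : Fin k → V), IsPathSeq G k p ∧
    ∀ v : V, (G.neighborSet v).ncard = 3 → ∃ i, p i = v

/-- `G` is a subdivided star. -/
def IsSubdividedStar {V : Type} (G : SimpleGraph V) : Prop :=
  ∃ m : ℕ, IsSubdivisionOf G (completeBipartiteGraph Unit (Fin m))

/-- `G` is the line graph of a caterpillar. -/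
def IsLineGraphOfCaterpillar {V : Type} (G : SimpleGraph V) : Prop :=
  ∃ (β : Type) (T : SimpleGraph β), Finite β ∧ IsCaterpillar T ∧ Nonempty (G ≃g lineGraph T)

/-- `G` is the line graph of a subdivided star. -/
def IsLineGraphOfSubdividedStar {V : Type} (G : SimpleGraph V) : Prop :=
  ∃ (β : Type) (T : SimpleGraph β), Finite β ∧ IsSubdividedStar T ∧
    Nonempty (G ≃g lineGraph T)

/-- The set `𝒵(G)` of vertices whose neighborhood is a clique. -/
def cliqueVerts {V : Type} (G : SimpleGraph V) : Set V :=
  {v | (G.neighborSet v).Pairwise G.Adj}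

/-- Membership in `𝒮`: a forest every component of which has at most three leaves. -/
def InS {V : Type} (T : SimpleGraph V) : Prop :=
  T.IsAcyclic ∧ ∀ c : T.ConnectedComponent,
    {v | T.connectedComponentMk v = c ∧ (T.neighborSet v).ncard = 1}.ncard ≤ 3

/-- The vertex set of a connected component of `G`. -/
def ccSet {V : Type} (G : SimpleGraph V) (c : G.ConnectedComponent) : Set V :=
  {v | G.connectedComponentMk v = c}

/-!
Faithfulness makes every `η(e, v)` nonempty, and by axiom (4) two vertices of `η(e, v)` and
`η(f, v)`, for distinct edges `e, f` at `v`, are adjacent. So one vertex of `η(f, v)` dominates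
`η(e, v)` for every other edge `e` at `v`. A leaf `w` of `H` has `η(e, w)` a singleton, because
axiom (7) puts the leaves in bijection with `Z`. Hence each end `η(uv, u)` of an edge is dominated
by one vertex, the boundary of `η(v)` by two and that of `η(D)` by three.
-/

section ClosedNbhd

variable {V : Type} {G : SimpleGraph V} {X : Set V}

lemma mem_closedNbhd_of_mem {x : V} (hx : x ∈ X) : x ∈ closedNbhd G X :=
  Or.inl hx

lemma mem_closedNbhd_of_adj {q x : V} (hq : q ∈ X) (h : G.Adj q x) : x ∈ closedNbhd G X :=
  Or.inr ⟨q, hq, h⟩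

lemma closedNbhd_mono {Y : Set V} (h : X ⊆ Y) : closedNbhd G X ⊆ closedNbhd G Y :=
  Set.union_subset_union h fun _ ⟨q, hq, hqx⟩ => ⟨q, h hq, hqx⟩

def HasCore (G : SimpleGraph V) (k : ℕ) (S : Set V) : Prop :=
  ∃ X : Finset V, X.card ≤ k ∧ S ⊆ closedNbhd G ↑X

lemma HasCore.mono {k l : ℕ} {S : Set V} (hkl : k ≤ l) (h : HasCore G k S) : HasCore G l S :=
  let ⟨X, hX, hS⟩ := h
  ⟨X, hX.trans hkl, hS⟩

end ClosedNbhd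

namespace ESD

variable {α β : Type} {G : SimpleGraph α} {Z : Set α} {H : SimpleGraph β} (η : ESD G Z H)

lemma adj_of_mem_evMap {e f : H.edgeSet} (hef : (e : Sym2 β) ≠ f) {v : β}
    (hve : v ∈ (e : Sym2 β)) (hvf : v ∈ (f : Sym2 β)) {x y : α}
    (hx : x ∈ η.evMap e v) (hy : y ∈ η.evMap f v) : G.Adj y x :=
  ((η.adj_iff f e (fun h => hef (congrArg Subtype.val h).symm) y (η.evMap_subset f v hy) x
    (η.evMap_subset e v hx)).2 ⟨v, hvf, hve, hy, hx⟩)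

lemma exists_forall_evMap_eq_singleton [Finite α] {w : β} (hw : ∃! u, H.Adj w u) :
    ∃ z, ∀ e : H.edgeSet, w ∈ (e : Sym2 β) → η.evMap e w = {z} := by
  obtain ⟨eqv⟩ := η.leaves_equiv
  choose leaf hleaf using fun z : Z => η.leaves_map z.1 z.2
  let F : Z → {w : β // ∃! u, H.Adj w u} := fun z => ⟨leaf z, (hleaf z).1⟩
  have hF : Function.Injective F := by
    intro z z' hzz'
    have hl : leaf z = leaf z' := congrArg Subtype.val hzz'
    obtain ⟨u, hu, -⟩ := (hleaf z).1
    have hmem : leaf z ∈ s(leaf z, u) := Sym2.mem_mk_left _ _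
    have hz := (hleaf z).2 ⟨_, H.mem_edgeSet.2 hu⟩ hmem
    have hz' := (hleaf z').2 ⟨_, H.mem_edgeSet.2 hu⟩ (hl ▸ hmem)
    rw [← hl, hz, Set.singleton_eq_singleton_iff] at hz'
    exact Subtype.ext hz'
  obtain ⟨z, hz⟩ := (Finite.injective_iff_surjective_of_equiv eqv).1 hF ⟨w, hw⟩
  obtain rfl : leaf z = w := congrArg Subtype.val hz
  exact ⟨z, (hleaf z).2⟩

variable {η}

lemma IsFaithful.evMap_nonempty (hη : η.IsFaithful) {u v : β} (h : H.Adj u v) :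
    (η.evMap ⟨s(u, v), H.mem_edgeSet.2 h⟩ v).Nonempty := by
  obtain ⟨k, hk, p, -, -, -, hp, -⟩ := hη u v h
  exact ⟨_, hp⟩

lemma IsFaithful.exists_evMap_subset_closedNbhd [Finite α] (hη : η.IsFaithful) {u v : β}
    (h : H.Adj u v) : ∃ q, η.evMap ⟨s(u, v), H.mem_edgeSet.2 h⟩ u ⊆ closedNbhd G {q} := by
  by_cases hleaf : ∃! t, H.Adj u t
  · obtain ⟨z, hz⟩ := η.exists_forall_evMap_eq_singleton hleaf
    exact ⟨z, (hz _ (Sym2.mem_mk_left _ _)).trans_subset fun _ => mem_closedNbhd_of_mem⟩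
  obtain ⟨t, hut, htv⟩ : ∃ t, H.Adj u t ∧ t ≠ v := by
    by_contra! hno
    exact hleaf ⟨v, h, fun t ht => hno t ht⟩
  obtain ⟨q, hq⟩ := hη.evMap_nonempty hut.symm
  refine ⟨q, fun x hx => mem_closedNbhd_of_adj rfl (η.adj_of_mem_evMap ?_
    (Sym2.mem_mk_left _ _) (Sym2.mem_mk_right _ _) hx hq)⟩
  exact (ne_of_mem_of_not_mem' (Sym2.mem_mk_left t u) (by simp [hut.ne', htv])).symm

lemma IsFaithful.hasCore_vertex_boundary [Finite α] (hη : η.IsFaithful) (v : β) :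
    HasCore G 2 {x | ∃ e : H.edgeSet, v ∈ (e : Sym2 β) ∧ x ∈ η.evMap e v} := by
  by_cases hiso : ∃ u, H.Adj v u
  swap
  · refine ⟨∅, by simp, ?_⟩
    rintro x ⟨e, hve, -⟩
    obtain ⟨u, hu⟩ := Sym2.mem_iff_exists.1 hve
    exact absurd ⟨u, by simpa [hu] using e.2⟩ hiso
  obtain ⟨u, hvu⟩ := hiso
  obtain ⟨q, hq⟩ := hη.exists_evMap_subset_closedNbhd hvu
  obtain ⟨r, hr⟩ := hη.evMap_nonempty hvu.symm
  refine ⟨{q, r}, Finset.card_le_two, ?_⟩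
  rintro x ⟨e, hve, hx⟩
  by_cases he : (e : Sym2 β) = s(v, u)
  · obtain rfl : e = ⟨s(v, u), H.mem_edgeSet.2 hvu⟩ := Subtype.ext he
    exact closedNbhd_mono (by simp) (hq hx)
  · refine mem_closedNbhd_of_adj (by simp)
      (η.adj_of_mem_evMap ?_ hve (Sym2.mem_mk_right _ _) hx hr)
    exact fun he' => he (he'.trans Sym2.eq_swap)

lemma IsFaithful.hasCore_edge_boundary [Finite α] (hη : η.IsFaithful) {u v : β}
    (h : H.Adj u v) :
    HasCore G 2
      (η.evMap ⟨s(u, v), H.mem_edgeSet.2 h⟩ u ∪ η.evMap ⟨s(u, v), H.mem_edgeSet.2 h⟩ v) := by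
  obtain ⟨q, hq⟩ := hη.exists_evMap_subset_closedNbhd h
  obtain ⟨r, hr⟩ := hη.exists_evMap_subset_closedNbhd h.symm
  rw [show (⟨s(v, u), _⟩ : H.edgeSet) = ⟨s(u, v), H.mem_edgeSet.2 h⟩ from
    Subtype.ext Sym2.eq_swap] at hr
  refine ⟨{q, r}, Finset.card_le_two, Set.union_subset (hq.trans (closedNbhd_mono ?_))
    (hr.trans (closedNbhd_mono ?_))⟩ <;> simp

/-- Orient the triangle `abc` cyclically and dominate `η(ab, a)`, `η(bc, b)`, `η(ca, c)` by
vertices of `η(ca, a)`, `η(ab, b)`, `η(bc, c)`. -/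
lemma IsFaithful.hasCore_triangle_boundary (hη : η.IsFaithful)
    (D : {T : Finset β // H.IsNClique 3 T}) :
    HasCore G 3 {x | ∃ u v : β, u ≠ v ∧ u ∈ D.1 ∧ v ∈ D.1 ∧
      ∃ e : H.edgeSet, (e : Sym2 β) = s(u, v) ∧ x ∈ η.evMap e u ∧ x ∈ η.evMap e v} := by
  obtain ⟨a, b, c, hne_ab, hne_ac, hne_bc, hD⟩ := Finset.card_eq_three.1 D.2.card_eq
  have hadj : ∀ x ∈ D.1, ∀ y ∈ D.1, x ≠ y → H.Adj x y := fun x hx y hy => D.2.isClique hx hy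
  have hca : H.Adj c a := hadj c (by simp [hD]) a (by simp [hD]) hne_ac.symm
  have hab : H.Adj a b := hadj a (by simp [hD]) b (by simp [hD]) hne_ab
  have hbc : H.Adj b c := hadj b (by simp [hD]) c (by simp [hD]) hne_bc
  obtain ⟨qa, hqa⟩ := hη.evMap_nonempty hca
  obtain ⟨qb, hqb⟩ := hη.evMap_nonempty hab
  obtain ⟨qc, hqc⟩ := hη.evMap_nonempty hbc
  refine ⟨{qa, qb, qc}, Finset.card_le_three, ?_⟩
  rintro x ⟨u, v, huv, hu, hv, e, he, hxu, hxv⟩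
  have hx : ∀ y ∈ (e : Sym2 β), x ∈ η.evMap e y := by
    rw [he]
    intro y hy
    rcases Sym2.mem_iff.1 hy with rfl | rfl <;> assumption
  have hcases : (a ∈ (e : Sym2 β) ∧ c ∉ (e : Sym2 β)) ∨ (b ∈ (e : Sym2 β) ∧ a ∉ (e : Sym2 β)) ∨
      (c ∈ (e : Sym2 β) ∧ b ∉ (e : Sym2 β)) := by
    simp only [hD, Finset.mem_insert, Finset.mem_singleton] at hu hv
    simp only [he, Sym2.mem_iff]
    grind
  have hdom : ∀ {y w : β} (hwy : H.Adj w y) {q : α},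
      q ∈ η.evMap ⟨s(w, y), H.mem_edgeSet.2 hwy⟩ y → q ∈ ({qa, qb, qc} : Finset α) →
      y ∈ (e : Sym2 β) → w ∉ (e : Sym2 β) → x ∈ closedNbhd G ↑({qa, qb, qc} : Finset α) :=
    fun hwy _ hq hqX hye hwe => mem_closedNbhd_of_adj hqX (η.adj_of_mem_evMap
      (ne_of_mem_of_not_mem' (Sym2.mem_mk_left _ _) hwe).symm hye (Sym2.mem_mk_right _ _)
      (hx _ hye) hq)
  rcases hcases with ⟨hae, hce⟩ | ⟨hbe, hae⟩ | ⟨hce, hbe⟩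
  · exact hdom hca hqa (by simp) hae hce
  · exact hdom hab hqb (by simp) hbe hae
  · exact hdom hbc hqc (by simp) hce hbe

end ESD

/-- For a faithful extended strip decomposition `η` of `(G,Z)` with `|Z| ≥ 2`,
the boundary of every atom has a core of size at most `3`. -/
theorem stmt_4 :
    ∀ (α β : Type) [Fintype α] [Fintype β] (G : SimpleGraph α) (Z : Set α)
      (H : SimpleGraph β), 2 ≤ Z.ncard →
      ∀ η : ESD G Z H, η.IsFaithful →
        ∀ A Δ : Set α, η.IsAtomBd A Δ →
          ∃ X : Finset α, X.card ≤ 3 ∧ Δ ⊆ closedNbhd G ↑X := by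
  intro α β _ _ G Z H _ η hη A Δ hA
  show HasCore G 3 Δ
  rcases hA with ⟨v, -, rfl⟩ | ⟨D, -, rfl⟩ | ⟨u, v, h, -, rfl⟩
  · exact (hη.hasCore_vertex_boundary v).mono (by norm_num)
  · exact hη.hasCore_triangle_boundary D
  · exact (hη.hasCore_edge_boundary h).mono (by norm_num)

end ArxivFormal
end

section
/- Let t, N > 1 and k be positive integers, and let G be a K_{t,t}-free graph. Let Y₁, …, Y_N be pairwise anticomplete subsets of V(G), each of size at most k, and write S_i = N[Y_i] for each i. Let Z = {v ∈ V(G) : v belongs to at least t of the sets S₁,…,S_N}. Then α(Z) ≤ C(N,t)·t·k^t, where C(N,t) is the binomial coefficient N choose t. -/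
/-!
Sort the vertices `v` of a stable set `I ⊆ Z` by a `t`-set `T` of indices with `v ∈ N[Y_i]`
for all `i ∈ T`; there are `C(N,t)` classes. Since `t ≥ 2` and the `Y_i` are pairwise
anticomplete, such a `v` lies in none of the `Y_i`, `i ∈ T`, hence has a neighbour in each of
them. Sorting a class further by a choice of these neighbours gives at most `k^t` subclasses,
and `t` vertices of one subclass together with their `t` common neighbours would induce
`K_{t,t}`. So each subclass has fewer than `t` vertices.
-/

open scoped BigOperators
open SimpleGraph

attribute [local instance] Classical.propDecidable

namespace ArxivFormal

section StableSets

open Finset Function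

variable {V : Type} {G : SimpleGraph V}

theorem nonempty_completeBipartiteGraph_embedding {A B : Set V} (hA : G.IsIndepSet A)
    (hB : G.IsIndepSet B) (hAB : ∀ a ∈ A, ∀ b ∈ B, G.Adj a b) :
    Nonempty (completeBipartiteGraph A B ↪g G) := by
  have not_adj {S : Set V} (hS : G.IsIndepSet S) (a b : S) : ¬ G.Adj a b := fun h =>
    hS a.2 b.2 (G.ne_of_adj h) h
  refine ⟨⟨⟨Sum.elim (↑) (↑), Subtype.val_injective.sumElim Subtype.val_injective
    fun a b => G.ne_of_adj (hAB a a.2 b b.2)⟩, ?_⟩⟩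
  rintro (a | a) (b | b)
  · simpa using not_adj hA a b
  · simpa using hAB a a.2 b b.2
  · simpa using (hAB b b.2 a a.2).symm
  · simpa using not_adj hB a b

theorem Anticomplete.notMem_of_mem_closedNbhd {X Y : Set V} {v : V} (h : Anticomplete G X Y)
    (hv : v ∈ closedNbhd G X) : v ∉ Y := by
  intro hvY
  rcases hv with hvX | ⟨x, hx, hxv⟩
  · exact Set.disjoint_left.mp h.1 hvX hvY
  · exact h.2 x hx v hvY hxv

theorem exists_adj_of_mem_closedNbhd_of_notMem {X : Set V} {v : V} (hv : v ∈ closedNbhd G X)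
    (hvX : v ∉ X) : ∃ x ∈ X, G.Adj x v :=
  hv.resolve_left hvX

section Transversal

variable {ι : Type*} {Y : ι → Set V} {y : ι → V}

theorem injective_of_pairwise_anticomplete (hanti : Pairwise fun i j => Anticomplete G (Y i) (Y j))
    (hy : ∀ i, y i ∈ Y i) : Injective y := by
  intro i j hij
  by_contra hne
  exact Set.disjoint_left.mp (hanti hne).1 (hy i) (hij ▸ hy j)

theorem isIndepSet_range_of_pairwise_anticomplete
    (hanti : Pairwise fun i j => Anticomplete G (Y i) (Y j)) (hy : ∀ i, y i ∈ Y i) :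
    G.IsIndepSet (Set.range y) := by
  rintro _ ⟨i, rfl⟩ _ ⟨j, rfl⟩ hne
  exact (hanti fun hij => hne (congrArg y hij)).2 _ (hy i) _ (hy j)

end Transversal

theorem card_lt_of_forall_adj {t : ℕ} (hfree : IndFree G (Ktt t)) {A B : Finset V}
    (hA : G.IsIndepSet A) (hB : G.IsIndepSet B) (hBcard : #B = t)
    (hAB : ∀ a ∈ A, ∀ b ∈ B, G.Adj a b) : #A < t := by
  by_contra! htA
  obtain ⟨A', hA'A, hA'card⟩ := exists_subset_card_eq htA
  obtain ⟨f⟩ := nonempty_completeBipartiteGraph_embedding (hA.mono (coe_subset.2 hA'A)) hB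
    fun a ha b hb => hAB a (hA'A ha) b hb
  exact hfree.false <| f.comp <| (completeBipartiteGraphCongr
    (A'.equivFinOfCardEq hA'card).symm (B.equivFinOfCardEq hBcard).symm).toEmbedding

theorem card_le_of_forall_mem_closedNbhd {ι : Type*} {Y : ι → Finset V} {t k : ℕ}
    (hfree : IndFree G (Ktt t)) (hY : ∀ i, #(Y i) ≤ k)
    (hanti : Pairwise fun i j => Anticomplete G (Y i) (Y j)) {T : Finset ι} (hT : #T = t)
    (ht : 1 < t) {I : Finset V} (hI : G.IsIndepSet I)
    (hIT : ∀ v ∈ I, ∀ i ∈ T, v ∈ closedNbhd G (Y i)) : #I ≤ t * k ^ t := by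
  have hT1 : 1 < #T := hT ▸ ht
  have hnb : ∀ v ∈ I, ∀ i : T, ∃ y ∈ Y i, G.Adj y v := by
    intro v hv i
    obtain ⟨j, hj, hji⟩ := exists_mem_ne hT1 i
    exact exists_adj_of_mem_closedNbhd_of_notMem (hIT v hv i i.2)
      ((hanti hji).notMem_of_mem_closedNbhd (hIT v hv j hj))
  choose! g hgY hgadj using hnb
  set P := Fintype.piFinset fun i : T => Y i
  have hPcard : #P ≤ k ^ t :=
    calc #P = ∏ i : T, #(Y i) := Fintype.card_piFinset _
      _ ≤ k ^ #(univ : Finset T) := prod_le_pow_card _ _ _ fun i _ => hY i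
      _ = k ^ t := by rw [card_univ, Fintype.card_coe, hT]
  have hfiber : ∀ y ∈ P, #{v ∈ I | g v = y} ≤ t := by
    intro y hy
    have hyY : ∀ i : T, y i ∈ (Y i : Set V) := Fintype.mem_piFinset.1 hy
    have hanti' := hanti.comp_of_injective (Subtype.val_injective (p := (· ∈ T)))
    refine (card_lt_of_forall_adj hfree (B := univ.image y)
      (hI.mono (coe_subset.2 (filter_subset _ _))) ?_ ?_ ?_).le
    · simpa using isIndepSet_range_of_pairwise_anticomplete hanti' hyY
    · rw [card_image_of_injective _ (injective_of_pairwise_anticomplete hanti' hyY), card_univ,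
        Fintype.card_coe, hT]
    · simp only [mem_filter, mem_image, mem_univ, true_and]
      rintro v ⟨hv, rfl⟩ _ ⟨i, rfl⟩
      exact (hgadj v hv i).symm
  calc #I ≤ t * #P :=
        card_le_mul_card_image_of_maps_to (fun v hv => Fintype.mem_piFinset.2 (hgY v hv)) t hfiber
    _ ≤ t * k ^ t := Nat.mul_le_mul_left t hPcard

theorem card_le_of_forall_le_card_filter_mem_closedNbhd {ι : Type*} [Fintype ι]
    {Y : ι → Finset V} {t k : ℕ} (hfree : IndFree G (Ktt t)) (hY : ∀ i, #(Y i) ≤ k)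
    (hanti : Pairwise fun i j => Anticomplete G (Y i) (Y j)) (ht : 1 < t) {I : Finset V}
    (hI : G.IsIndepSet I) (hIZ : ∀ v ∈ I, t ≤ #{i | v ∈ closedNbhd G (Y i)}) :
    #I ≤ (Fintype.card ι).choose t * t * k ^ t := by
  have hT : ∀ v ∈ I, ∃ T ⊆ ({i | v ∈ closedNbhd G (Y i)} : Finset ι), #T = t :=
    fun v hv => exists_subset_card_eq (hIZ v hv)
  choose! T hTsub hTcard using hT
  have hclass : ∀ T₀ ∈ powersetCard t univ, #{v ∈ I | T v = T₀} ≤ t * k ^ t := by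
    intro T₀ hT₀
    refine card_le_of_forall_mem_closedNbhd hfree hY hanti (mem_powersetCard.1 hT₀).2 ht
      (hI.mono (coe_subset.2 (filter_subset _ _))) fun v hv i hi => ?_
    obtain ⟨hvI, rfl⟩ := mem_filter.1 hv
    exact (mem_filter.1 (hTsub v hvI hi)).2
  calc #I ≤ t * k ^ t * #(powersetCard t (univ : Finset ι)) :=
        card_le_mul_card_image_of_maps_to
          (fun v hv => mem_powersetCard.2 ⟨subset_univ _, hTcard v hv⟩) _ hclass
    _ = (Fintype.card ι).choose t * t * k ^ t := by
      rw [card_powersetCard, card_univ]; ring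

theorem alphaOn_le_of_forall_card_le [Fintype V] {S : Set V} {n : ℕ}
    (h : ∀ I : Finset V, ↑I ⊆ S → G.IsIndepSet I → #I ≤ n) : alphaOn G S ≤ n := by
  refine csSup_le' ?_
  rintro _ ⟨I, hIS, hI, rfl⟩
  exact h I hIS fun u hu v hv _ => hI u hu v hv

end StableSets

/-- if `G` is `K_{t,t}`-free and `Y₁,…,Y_N` are pairwise anticomplete sets of
size at most `k`, then the set of vertices lying in at least `t` of the closed neighborhoods
`N[Y_i]` has stability number at most `(N choose t)·t·k^t`. -/
theorem stmt_17 :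
    ∀ t N k : ℕ, 1 < t → 1 < N → 0 < k →
    ∀ (V : Type) [Fintype V] (G : SimpleGraph V), IndFree G (Ktt t) →
    ∀ Y : Fin N → Finset V, (∀ i, (Y i).card ≤ k) →
      (∀ i j, i ≠ j → Anticomplete G ↑(Y i) ↑(Y j)) →
      alphaOn G {v | t ≤ (Finset.univ.filter
          (fun i : Fin N => v ∈ closedNbhd G ↑(Y i))).card}
        ≤ N.choose t * t * k ^ t := by
  intro t N k ht _ _ V _ G hfree Y hY hanti
  refine alphaOn_le_of_forall_card_le fun I hIZ hI => ?_
  simpa using card_le_of_forall_le_card_filter_mem_closedNbhd hfree hY hanti ht hI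
    fun v hv => hIZ hv

end ArxivFormal
end
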